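/- arXiv:2510.13117 — 4 statements merged into one kernel-verified Lean document; each statement's English description precedes it below -/
import Mathlib

section
/- Let m ∈ ℕ, let c > 0 be a real number, and let n, n' be natural numbers with n < 2^m and n' < 2^m. Define the query vector q_n := c · interleave(sbin_m(n), 1_m) ∈ ℝ^{2m} and the key vector k_{n'} := interleave(sbin_m(n'), −1_m) ∈ ℝ^{2m}, where 1_m is the all-ones vector. Then ⟨q_n, k_{n'}⟩ = c·(⟨sbin_m(n), sbin_m(n')⟩ − m); consequently ⟨q_n, k_{n'}⟩ = 0 if n = n', and ⟨q_n, k_{n'}⟩ ≤ −2c if n ≠ n'. In particular, for any real B > 0 and c = B, the truncation of ⟨q_n, k_{n'}⟩ to the interval [−B, B] equals 0 if n = n' and equals −B if n ≠ n'. -/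
/-- The binary encoding `bin m n ∈ {0,1}^m` of a natural number `n < 2^m`:
its `i`-th entry is the `i`-th binary digit of `n`. -/
def bin (m n : ℕ) : Fin m → ℝ := fun i => ((n / 2 ^ i.val) % 2 : ℕ)

/-- The signed binary encoding `sbin m n ∈ {-1,1}^m`, `sbin m n i = 2 ⬝ bin m n i - 1`. -/
def sbin (m n : ℕ) : Fin m → ℝ := fun i => 2 * bin m n i - 1

/-- The interleaving of two vectors `x, y ∈ ℝ^m` into a vector in `ℝ^{2m}`:
(0-based) even coordinates are the coordinates of `x` in order,
odd coordinates are the coordinates of `y` in order. -/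
def interleave (m : ℕ) (x y : Fin m → ℝ) (i : Fin (2 * m)) : ℝ :=
  if i.val % 2 = 0 then x ⟨i.val / 2, by have := i.isLt; omega⟩
  else y ⟨i.val / 2, by have := i.isLt; omega⟩

lemma sum_range_two_mul' (m : ℕ) (g : ℕ → ℝ) :
    ∑ i ∈ Finset.range (2 * m), g i = ∑ j ∈ Finset.range m, (g (2 * j) + g (2 * j + 1)) := by
  induction m with
  | zero => simp
  | succ k ih =>
    rw [show 2 * (k + 1) = (2 * k + 1) + 1 by ring, Finset.sum_range_succ, Finset.sum_range_succ,
      ih, Finset.sum_range_succ]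
    ring

lemma sum_interleave (m : ℕ) (x x' y y' : Fin m → ℝ) :
    ∑ i, interleave m x y i * interleave m x' y' i
      = ∑ j, (x j * x' j + y j * y' j) := by
  classical
  set F : Fin (2 * m) → ℝ := fun i => interleave m x y i * interleave m x' y' i with hF
  let g : ℕ → ℝ := fun i => if h : i < 2 * m then F ⟨i, h⟩ else 0
  have h1 : ∑ i, F i = ∑ i ∈ Finset.range (2 * m), g i := by
    rw [← Fin.sum_univ_eq_sum_range g (2 * m)]
    refine Finset.sum_congr rfl fun i _ => ?_
    simp [g, i.isLt]
  let h : ℕ → ℝ := fun j => if hj : j < m then x ⟨j, hj⟩ * x' ⟨j, hj⟩ + y ⟨j, hj⟩ * y' ⟨j, hj⟩ else 0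
  have h2 : ∑ j, (x j * x' j + y j * y' j) = ∑ j ∈ Finset.range m, h j := by
    rw [← Fin.sum_univ_eq_sum_range h m]
    refine Finset.sum_congr rfl fun j _ => ?_
    simp [h, j.isLt]
  rw [h1, h2, sum_range_two_mul' m g]
  refine Finset.sum_congr rfl fun j hj => ?_
  have hjm : j < m := Finset.mem_range.mp hj
  have e1 : 2 * j < 2 * m := by omega
  have e2 : 2 * j + 1 < 2 * m := by omega
  have m1 : (2 * j) % 2 = 0 := by omega
  have m2 : (2 * j + 1) % 2 = 1 := by omega
  have d1 : (2 * j) / 2 = j := by omega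
  have d2 : (2 * j + 1) / 2 = j := by omega
  simp only [g, h, F, dif_pos e1, dif_pos e2, dif_pos hjm, interleave, m1, m2]
  norm_num [d1, d2]

lemma bits01 (n : ℕ) (i : ℕ) : n / 2 ^ i % 2 = 0 ∨ n / 2 ^ i % 2 = 1 :=
  Nat.mod_two_eq_zero_or_one _

lemma sbin_mul_le (m n n' : ℕ) (i : Fin m) : sbin m n i * sbin m n' i ≤ 1 := by
  rcases bits01 n i.val with h | h <;> rcases bits01 n' i.val with h' | h' <;>
    simp [sbin, bin, h, h'] <;> norm_num

lemma sbin_sq (m n : ℕ) (i : Fin m) : sbin m n i * sbin m n i = 1 := by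
  rcases bits01 n i.val with h | h <;> simp [sbin, bin, h] <;> norm_num

/-- With query `q_n = c ⬝ interleave(sbin m n, 1)` and key `k_{n'} = interleave(sbin m n', -1)`,
the attention score `⟨q_n, k_{n'}⟩` equals `c(⟨sbin m n, sbin m n'⟩ - m)`; it is `0` if `n = n'`
and at most `-2c` if `n ≠ n'`; and, for any `B > 0` with `c = B`, its truncation to `[-B, B]`
is `0` if `n = n'` and `-B` otherwise. -/
theorem interleaved_attention_scores (m : ℕ) (c : ℝ) (hc : 0 < c) (n n' : ℕ)
    (hn : n < 2 ^ m) (hn' : n' < 2 ^ m) :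
    (∑ i, (c * interleave m (sbin m n) (fun _ => 1) i) *
        interleave m (sbin m n') (fun _ => -1) i =
      c * ((∑ i, sbin m n i * sbin m n' i) - m)) ∧
    (n = n' → ∑ i, (c * interleave m (sbin m n) (fun _ => 1) i) *
        interleave m (sbin m n') (fun _ => -1) i = 0) ∧
    (n ≠ n' → ∑ i, (c * interleave m (sbin m n) (fun _ => 1) i) *
        interleave m (sbin m n') (fun _ => -1) i ≤ -(2 * c)) ∧
    (∀ B : ℝ, 0 < B → c = B →
      max (-B) (min B (∑ i, (c * interleave m (sbin m n) (fun _ => 1) i) *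
          interleave m (sbin m n') (fun _ => -1) i)) =
        if n = n' then 0 else -B) := by
  classical
  have key : ∑ i, (c * interleave m (sbin m n) (fun _ => 1) i) *
      interleave m (sbin m n') (fun _ => -1) i =
      c * ((∑ i, sbin m n i * sbin m n' i) - m) := by
    have : ∑ i, (c * interleave m (sbin m n) (fun _ => 1) i) *
        interleave m (sbin m n') (fun _ => -1) i =
        c * ∑ i, interleave m (sbin m n) (fun _ => 1) i *
          interleave m (sbin m n') (fun _ => -1) i := by
      rw [Finset.mul_sum]; exact Finset.sum_congr rfl fun i _ => by ring
    rw [this, sum_interleave]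
    have : ∑ j : Fin m, (sbin m n j * sbin m n' j + (1 : ℝ) * (-1))
        = (∑ j : Fin m, sbin m n j * sbin m n' j) - m := by
      rw [Finset.sum_add_distrib]
      push_cast
      simp
      ring
    rw [this]
  have heq : n = n' → ∑ i, (c * interleave m (sbin m n) (fun _ => 1) i) *
      interleave m (sbin m n') (fun _ => -1) i = 0 := by
    intro h; subst h
    rw [key]
    have : ∑ i, sbin m n i * sbin m n i = (m : ℝ) := by
      rw [Finset.sum_congr rfl fun i _ => sbin_sq m n i]; simp
    rw [this]; ring
  have hne : n ≠ n' → ∑ i, (c * interleave m (sbin m n) (fun _ => 1) i) *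
      interleave m (sbin m n') (fun _ => -1) i ≤ -(2 * c) := by
    intro h
    rw [key]
    -- find a differing bit
    have hex : ∃ i : Fin m, n / 2 ^ i.val % 2 ≠ n' / 2 ^ i.val % 2 := by
      by_contra hco
      push_neg at hco
      apply h
      apply Nat.eq_of_testBit_eq
      intro i
      by_cases him : i < m
      · have := hco ⟨i, him⟩
        simp only [Nat.testBit_eq_decide_div_mod_eq]
        simp only at this
        rw [this]
      · have h1 : n.testBit i = false := Nat.testBit_eq_false_of_lt
          (lt_of_lt_of_le hn (Nat.pow_le_pow_right (by norm_num) (by omega)))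
        have h2 : n'.testBit i = false := Nat.testBit_eq_false_of_lt
          (lt_of_lt_of_le hn' (Nat.pow_le_pow_right (by norm_num) (by omega)))
        rw [h1, h2]
    obtain ⟨i, hi⟩ := hex
    have hterm : sbin m n i * sbin m n' i = -1 := by
      rcases bits01 n i.val with h1 | h1 <;> rcases bits01 n' i.val with h2 | h2 <;>
        first
          | (exfalso; omega)
          | (simp [sbin, bin, h1, h2]; norm_num)
    have hsum : ∑ j : Fin m, sbin m n j * sbin m n' j ≤ (m : ℝ) - 2 := by
      have hins := Finset.add_sum_erase Finset.univ (fun j => sbin m n j * sbin m n' j)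
        (Finset.mem_univ i)
      rw [← hins]
      change sbin m n i * sbin m n' i + ∑ j ∈ Finset.univ.erase i, sbin m n j * sbin m n' j ≤ _
      rw [hterm]
      have hrest : ∑ j ∈ Finset.univ.erase i, sbin m n j * sbin m n' j ≤ (m : ℝ) - 1 := by
        calc ∑ j ∈ Finset.univ.erase i, sbin m n j * sbin m n' j
            ≤ ∑ j ∈ Finset.univ.erase i, (1 : ℝ) :=
              Finset.sum_le_sum fun j _ => sbin_mul_le m n n' j
          _ = (m : ℝ) - 1 := by
              rw [Finset.sum_const]
              have hm : 1 ≤ m := i.pos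
              simp [Finset.card_erase_of_mem]
              rw [Nat.cast_sub hm]
              simp
      linarith
    have : c * ((∑ i, sbin m n i * sbin m n' i) - m) ≤ c * (-2) := by
      apply mul_le_mul_of_nonneg_left _ hc.le
      linarith
    linarith
  refine ⟨key, heq, hne, ?_⟩
  intro B hB hcB
  subst hcB
  by_cases h : n = n'
  · rw [if_pos h, heq h]
    rw [min_eq_right hB.le, max_eq_right (by linarith)]
  · rw [if_neg h]
    have := hne h
    have hmin : min c (∑ i, (c * interleave m (sbin m n) (fun _ => 1) i) *
        interleave m (sbin m n') (fun _ => -1) i) =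
        ∑ i, (c * interleave m (sbin m n) (fun _ => 1) i) *
          interleave m (sbin m n') (fun _ => -1) i :=
      min_eq_right (by linarith)
    rw [hmin, max_eq_left (by linarith)]
end

section
/- Let p, D ∈ ℕ with D ≥ 1, and let x ∈ ℝ^D be a vector each of whose coordinates is an integer multiple of 2^{−p}. For each index i ∈ {1, …, D} define g_i := 2^p · max(0, 2^{−p} − Σ_{j ≠ i} max(0, x_j − x_i)). If there exists an index d such that x_d > x_j for every j ≠ d, then g_d = 1 and g_i = 0 for every i ≠ d; that is, the vector (g_1, …, g_D) equals the d-th standard basis vector of ℝ^D. (This is the explicit three-layer ReLU network that computes the argmax of a fixed-precision vector.) -/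
/-!
At the strict maximizer `d` every term `max 0 (x j - x d)` vanishes, so the gate passes
`2^{-p}` unchanged and the rescaled output is `1`. For `i ≠ d` the term with `j = d` alone is
`x d - x i`, a positive multiple of `2^{-p}`, hence at least `2^{-p}`: the gate outputs `0`.
-/

open Finset

theorem le_sub_of_intCast_mul_lt {K : Type*} [Ring K] [LinearOrder K] [IsStrictOrderedRing K]
    {ε : K} (hε : 0 < ε) {m n : ℤ} (h : m * ε < n * ε) : ε ≤ n * ε - m * ε := by
  have hmn : m + 1 ≤ n := by exact_mod_cast lt_of_mul_lt_mul_right h hε.le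
  have hone : (1 : K) ≤ n - m := by
    rw [le_sub_iff_add_le']; exact_mod_cast hmn
  rw [← sub_mul]
  exact le_mul_of_one_le_left hε.le hone

section ReluSum

variable {ι α : Type*} [Fintype ι] [DecidableEq ι]
  [AddCommGroup α] [LinearOrder α] [IsOrderedAddMonoid α]

theorem sum_erase_max_zero_sub_eq_zero {x : ι → α} {i : ι} (hi : ∀ j, j ≠ i → x j ≤ x i) :
    ∑ j ∈ univ.erase i, max 0 (x j - x i) = 0 :=
  sum_eq_zero fun j hj => max_eq_left (sub_nonpos.2 (hi j (ne_of_mem_erase hj)))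

theorem sub_le_sum_erase_max_zero_sub (x : ι → α) {i j : ι} (hji : j ≠ i) :
    x j - x i ≤ ∑ k ∈ univ.erase i, max 0 (x k - x i) :=
  (le_max_right 0 _).trans <|
    single_le_sum (f := fun k => max 0 (x k - x i)) (fun _ _ => le_max_left _ _)
      (mem_erase.2 ⟨hji, mem_univ j⟩)

end ReluSum

theorem relu_argmax_general (p D : ℕ) (x : Fin D → ℝ)
    (hx : ∀ i, ∃ z : ℤ, x i = (z : ℝ) * (2 : ℝ) ^ (-(p : ℤ)))
    (d : Fin D) (hd : ∀ j, j ≠ d → x j < x d) :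
    (fun i => (2 : ℝ) ^ (p : ℕ) *
        max 0 ((2 : ℝ) ^ (-(p : ℤ)) - ∑ j ∈ Finset.univ.erase i, max 0 (x j - x i))) =
      fun i => if i = d then (1 : ℝ) else 0 := by
  have hε : (0 : ℝ) < 2 ^ (-(p : ℤ)) := zpow_pos two_pos _
  have hscale : (2 : ℝ) ^ p = ((2 : ℝ) ^ (-(p : ℤ)))⁻¹ := by simp [zpow_neg]
  funext i
  rw [hscale]
  split_ifs with hi
  · subst hi
    rw [sum_erase_max_zero_sub_eq_zero fun j hj => (hd j hj).le, sub_zero,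
      max_eq_right hε.le, inv_mul_cancel₀ hε.ne']
  · obtain ⟨zd, hzd⟩ := hx d
    obtain ⟨zi, hzi⟩ := hx i
    have hgap : (2 : ℝ) ^ (-(p : ℤ)) ≤ x d - x i := by
      have hlt := hd i hi
      rw [hzd, hzi] at hlt ⊢
      exact le_sub_of_intCast_mul_lt hε hlt
    have hsum := hgap.trans (sub_le_sum_erase_max_zero_sub x (Ne.symm hi))
    rw [max_eq_left (sub_nonpos.2 hsum), mul_zero]

/-- The explicit ReLU network computing the argmax of a fixed-precision vector:
if all coordinates of `x ∈ ℝ^D` are integer multiples of `2^{-p}` and `x` has a unique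
strict maximizer `d`, then `g_i := 2^p ⬝ max(0, 2^{-p} - Σ_{j ≠ i} max(0, x_j - x_i))`
equals the `d`-th standard basis vector. -/
theorem relu_argmax (p D : ℕ) (hD : 1 ≤ D) (x : Fin D → ℝ)
    (hx : ∀ i, ∃ z : ℤ, x i = (z : ℝ) * (2 : ℝ) ^ (-(p : ℤ)))
    (d : Fin D) (hd : ∀ j, j ≠ d → x j < x d) :
    (fun i => (2 : ℝ) ^ (p : ℕ) *
        max 0 ((2 : ℝ) ^ (-(p : ℤ)) - ∑ j ∈ Finset.univ.erase i, max 0 (x j - x i))) =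
      fun i => if i = d then (1 : ℝ) else 0 :=
  relu_argmax_general p D x hx d hd
end

section
/- Let M be a monoid and let l be a nonempty list over M of length N ≥ 1. Then for every natural number k with 2^k ≥ N, the k-fold iterate of pairStep applied to l equals the one-element list [l.prod]. In particular, taking k = ⌈log₂ N⌉ (the least k with N ≤ 2^k), the product of a list of N monoid elements is computed by ⌈log₂ N⌉ rounds of parallel pairwise combination. (This log-depth parallel reduction is the computational core of the theorem that regular languages are recognizable by masked diffusion models with ⌈log N⌉ denoising steps and N output symbols.) -/
/-- One round of parallel pairwise combination: replace each consecutive pair of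
elements by its product, leaving a final unpaired element unchanged. -/
def pairStep {M : Type*} [Monoid M] : List M → List M
  | [] => []
  | [a] => [a]
  | a :: b :: l => (a * b) :: pairStep l

lemma pairStep_prod {M : Type*} [Monoid M] : ∀ l : List M, (pairStep l).prod = l.prod
  | [] => rfl
  | [a] => rfl
  | a :: b :: l => by
      simp [pairStep, pairStep_prod l, mul_assoc]

lemma pairStep_length {M : Type*} [Monoid M] :
    ∀ l : List M, (pairStep l).length = (l.length + 1) / 2
  | [] => by simp [pairStep]
  | [a] => by simp [pairStep]
  | a :: b :: l => by
      simp [pairStep, pairStep_length l]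
      omega

/-- For a nonempty list `l` of monoid elements and any `k` with `2^k ≥ length of l`,
the `k`-fold iterate of `pairStep` reduces `l` to the single-element list `[l.prod]`:
the product of `N` monoid elements is computed in `⌈log₂ N⌉` rounds of parallel
pairwise combination. -/
theorem pairStep_iterate_prod {M : Type*} [Monoid M] (l : List M) (hl : l ≠ [])
    (k : ℕ) (hk : l.length ≤ 2 ^ k) :
    pairStep^[k] l = [l.prod] := by
  induction k generalizing l with
  | zero =>
    simp only [pow_zero] at hk
    match l, hl with
    | [a], _ => simp
    | a :: b :: l, _ => simp at hk
  | succ k ih =>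
    rw [Function.iterate_succ_apply]
    have h1 : (pairStep l).length = (l.length + 1) / 2 := pairStep_length l
    have h2 : (pairStep l).prod = l.prod := pairStep_prod l
    have hne : pairStep l ≠ [] := by
      intro h
      rw [h] at h1
      simp at h1
      have : l.length ≠ 0 := by simpa using hl
      omega
    rw [ih (pairStep l) hne (by rw [h1]; rw [pow_succ] at hk; omega), h2]
end

section
/- Let Σ be an alphabet, Q a type of states, and let M be a deterministic finite automaton over Σ with state set Q and transition function δ : Q → Σ → Q. Let w = w_1 ⋯ w_N be a word over Σ of length N ≥ 1, and let l = [t_1, …, t_N] be the list in the monoid of self-maps of Q—equipped with the product f * g := g ∘ f (first apply f, then g), whose identity is the identity map—where t_i(q) := δ(q, w_i). Then for every natural number k with 2^k ≥ N, the k-fold iterate of pairStep applied to l equals the one-element list [f], where f(q) = evalFrom(q, w) for every state q, i.e., f sends each state q to the state M reaches from q after reading w. In particular, taking k = ⌈log₂ N⌉, membership of w in the language of M is determined after ⌈log₂ N⌉ rounds of parallel pairwise composition of transition maps. (This is the transition-monoid instantiation underlying the theorem that regular languages are in MDM[log N, N].) -/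
section pairStep

variable {M : Type*} [Monoid M]

theorem prod_pairStep : ∀ l : List M, (pairStep l).prod = l.prod
  | [] => rfl
  | [_] => rfl
  | a :: b :: l => by rw [pairStep, List.prod_cons, prod_pairStep l, List.prod_cons,
      List.prod_cons, mul_assoc]

theorem length_pairStep : ∀ l : List M, (pairStep l).length = (l.length + 1) / 2
  | [] | [_] => by simp [pairStep]
  | a :: b :: l => by
    simp only [pairStep, List.length_cons, length_pairStep l]
    omega

theorem pairStep_iterate_eq_singleton_prod :
    ∀ (k : ℕ) (l : List M), l ≠ [] → l.length ≤ 2 ^ k → pairStep^[k] l = [l.prod]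
  | 0, l, hne, hle => by
    obtain ⟨a, rfl⟩ : ∃ a, l = [a] :=
      List.length_eq_one_iff.mp (le_antisymm hle (List.length_pos_iff.mpr hne))
    simp
  | k + 1, l, hne, hle => by
    rw [pow_succ] at hle
    have hne' : pairStep l ≠ [] := by
      rw [← List.length_pos_iff, length_pairStep]
      have := List.length_pos_iff.mpr hne
      omega
    have hle' : (pairStep l).length ≤ 2 ^ k := by
      rw [length_pairStep]
      omega
    rw [Function.iterate_succ_apply, pairStep_iterate_eq_singleton_prod k _ hne' hle',
      prod_pairStep]

end pairStep

theorem DFA.prod_map_op_step {α Q : Type*} (M : DFA α Q) : ∀ w : List α,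
    (w.map fun a => MulOpposite.op (fun q => M.step q a : Function.End Q) :
      List (Function.End Q)ᵐᵒᵖ).prod
      = MulOpposite.op (fun q => M.evalFrom q w : Function.End Q)
  | [] => rfl
  | a :: w => by
    rw [List.map_cons, List.prod_cons, DFA.prod_map_op_step M w]
    rfl

/-- The transition-monoid instantiation of log-depth parallel reduction: for a DFA `M`
over alphabet `α` with states `Q`, and a word `w` of length `N ≥ 1`, let `l` be the list
of transition maps `t_i q = δ q w_i`, viewed in the monoid of self-maps of `Q` with
product "first apply `f`, then `g`" (the multiplicative opposite of `Function.End Q`).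
Then for every `k` with `2^k ≥ N`, the `k`-fold iterate of `pairStep` applied to `l`
is the one-element list consisting of the map sending each state `q` to
`M.evalFrom q w`, the state reached from `q` after reading `w`. -/
theorem dfa_transition_pairStep {α Q : Type*} (M : DFA α Q) (w : List α)
    (hN : 1 ≤ w.length)
    (l : List (Function.End Q)ᵐᵒᵖ)
    (hl : l = w.map (fun a => MulOpposite.op (fun q => M.step q a : Function.End Q)))
    (k : ℕ) (hk : w.length ≤ 2 ^ k) :
    pairStep^[k] l = [MulOpposite.op (fun q => M.evalFrom q w : Function.End Q)] := by
  have hlen : l.length = w.length := hl ▸ List.length_map _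
  have hne : l ≠ [] := List.length_pos_iff.mp (hlen ▸ hN)
  rw [pairStep_iterate_eq_singleton_prod k l hne (hlen ▸ hk), hl]
  exact congrArg List.singleton (M.prod_map_op_step w)
end
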